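/- Let $y\in(\mathbb{P}^{d-1})^*$ with associated hyperplane $H_y=\mathbb{P}(\ker f)$ for $y=[f]$, $f\in(\mathbb{R}^d)^*\setminus\{0\}$. For $x=[v]\in\mathbb{P}^{d-1}$ define $\delta(x,y):=\frac{|\langle f,v\rangle|}{\|f\|\,\|v\|}$. Then $\delta(x,y)=d(x,H_y):=\inf_{w\in H_y}d(x,w)$, where $d$ is the sine-of-angle metric on $\mathbb{P}^{d-1}$. -/

import Mathlib

open Real Set
open scoped RealInnerProductSpace

lemma bessel_aux (E : Type*) [NormedAddCommGroup E] [InnerProductSpace ℝ E]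
    (u v w : E) (hu : u ≠ 0) (hw : w ≠ 0) (huw : ⟪u,w⟫ = 0) :
    ⟪u,v⟫^2*‖w‖^2 + ⟪v,w⟫^2*‖u‖^2 ≤ ‖v‖^2*‖u‖^2*‖w‖^2 := by
  have h := real_inner_self_nonneg (x := (‖u‖^2*‖w‖^2) • v - (‖w‖^2 * ⟪u,v⟫) • u - (‖u‖^2 * ⟪v,w⟫) • w)
  have h1 : ⟪v,u⟫ = ⟪u,v⟫ := real_inner_comm _ _
  have h2 : ⟪w,u⟫ = 0 := by rw [real_inner_comm]; exact huw
  have h3 : ⟪w,v⟫ = ⟪v,w⟫ := real_inner_comm _ _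
  simp only [inner_sub_left, inner_sub_right, real_inner_smul_left, real_inner_smul_right,
    real_inner_self_eq_norm_sq, norm_smul, mul_pow, sq_abs, Real.norm_eq_abs,
    h1, h2, h3, huw] at h
  have hup : (0:ℝ) < ‖u‖^2 := by have := norm_pos_iff.mpr hu; positivity
  have hwp : (0:ℝ) < ‖w‖^2 := by have := norm_pos_iff.mpr hw; positivity
  nlinarith [mul_pos hup hwp, h, sq_nonneg ‖v‖]

/-- for `y = [f]` and `x = [v]`, the quantity `|⟨f,v⟩|/(‖f‖‖v‖)` equals the
sine-distance from `x` to the hyperplane `H_y = ℙ(ker f)`. -/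
theorem delta_eq_dist_to_hyperplane (d : ℕ) (hd : 2 ≤ d)
    (f : EuclideanSpace ℝ (Fin d) →L[ℝ] ℝ) (hf : f ≠ 0)
    (v : EuclideanSpace ℝ (Fin d)) (hv : v ≠ 0) :
    |f v| / (‖f‖ * ‖v‖)
      = sInf {r : ℝ | ∃ w : EuclideanSpace ℝ (Fin d), w ≠ 0 ∧ f w = 0 ∧
          r = Real.sqrt (1 - (⟪v, w⟫ / (‖v‖ * ‖w‖)) ^ 2)} := by
  classical
  obtain ⟨u, hfw, hnu⟩ : ∃ u : EuclideanSpace ℝ (Fin d),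
      (∀ w, f w = ⟪u, w⟫) ∧ ‖u‖ = ‖f‖ := by
    refine ⟨(InnerProductSpace.toDual ℝ _).symm f, fun w => ?_,
      (InnerProductSpace.toDual ℝ _).symm.norm_map f⟩
    conv_lhs => rw [← (InnerProductSpace.toDual ℝ _).apply_symm_apply f]
    rfl
  have hu0 : u ≠ 0 := by
    intro h
    exact hf (by ext w; simp [hfw w, h])
  have hvn : (0:ℝ) < ‖v‖ := norm_pos_iff.mpr hv
  have hun : (0:ℝ) < ‖u‖ := norm_pos_iff.mpr hu0
  rw [hfw v, ← hnu]
  symm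
  apply IsLeast.csInf_eq
  constructor
  · -- membership
    set p : EuclideanSpace ℝ (Fin d) := v - (⟪u,v⟫/‖u‖^2) • u with hp_def
    have hup : ⟪u, p⟫ = 0 := by
      simp only [hp_def, inner_sub_right, real_inner_smul_right, real_inner_self_eq_norm_sq]
      field_simp
      ring
    by_cases hp : p = 0
    · -- v parallel to u; pick any nonzero kernel vector
      obtain ⟨w, hwmem, hw0⟩ : ∃ w ∈ LinearMap.ker (f : EuclideanSpace ℝ (Fin d) →ₗ[ℝ] ℝ), w ≠ 0 := by
        apply Submodule.exists_mem_ne_zero_of_ne_bot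
        intro hbot
        have h1 := LinearMap.finrank_range_add_finrank_ker (f : EuclideanSpace ℝ (Fin d) →ₗ[ℝ] ℝ)
        rw [hbot, finrank_bot] at h1
        have h2 : Module.finrank ℝ (LinearMap.range (f : EuclideanSpace ℝ (Fin d) →ₗ[ℝ] ℝ)) ≤ 1 := by
          simpa using Submodule.finrank_le (LinearMap.range (f : EuclideanSpace ℝ (Fin d) →ₗ[ℝ] ℝ))
        rw [finrank_euclideanSpace_fin] at h1
        omega
      have hfw0 : f w = 0 := hwmem
      have huw : ⟪u, w⟫ = 0 := by rw [← hfw w]; exact hfw0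
      refine ⟨w, hw0, hfw0, ?_⟩
      have hvw : ⟪v, w⟫ = 0 := by
        have hveq : v = (⟪u,v⟫/‖u‖^2) • u := by
          have := hp; rw [hp_def, sub_eq_zero] at this; exact this
        rw [hveq, real_inner_smul_left, huw, mul_zero]
      rw [hvw]
      -- target: |⟪u,v⟫| / (‖u‖ * ‖v‖) = sqrt (1 - 0)
      have hveq : v = (⟪u,v⟫/‖u‖^2) • u := by
        have := hp; rw [hp_def, sub_eq_zero] at this; exact this
      have hnv : ‖v‖ * ‖u‖ = |⟪u,v⟫| := by
        conv_lhs => rw [hveq]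
        rw [norm_smul, Real.norm_eq_abs, abs_div, abs_of_nonneg (by positivity : (0:ℝ) ≤ ‖u‖^2)]
        field_simp
      simp only [zero_div, ne_eq, OfNat.ofNat_ne_zero, not_false_eq_true, zero_pow, sub_zero,
        Real.sqrt_one]
      rw [div_eq_one_iff_eq (by positivity)]
      rw [← hnv]; ring
    · -- use p itself
      have hfp : f p = 0 := by rw [hfw p]; exact hup
      refine ⟨p, hp, hfp, ?_⟩
      have hpn : (0:ℝ) < ‖p‖ := norm_pos_iff.mpr hp
      have hvp : ⟪v, p⟫ = ‖p‖^2 := by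
        have : ⟪p, p⟫ = ‖p‖^2 := real_inner_self_eq_norm_sq p
        calc ⟪v, p⟫ = ⟪p, p⟫ + (⟪u,v⟫/‖u‖^2) * ⟪u, p⟫ := by
              simp only [hp_def, inner_sub_left, real_inner_smul_left]; ring
          _ = ‖p‖^2 := by rw [hup, this]; ring
      have hpv2 : ‖p‖^2 = ‖v‖^2 - ⟪u,v⟫^2/‖u‖^2 := by
        rw [← hvp]
        simp only [hp_def, inner_sub_right, real_inner_smul_right,
          real_inner_self_eq_norm_sq, real_inner_comm v u]
        generalize ⟪u,v⟫ = a
        field_simp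
      rw [hvp]
      have e : 1 - (‖p‖^2 / (‖v‖ * ‖p‖))^2 = (|⟪u,v⟫| / (‖u‖ * ‖v‖))^2 := by
        rw [div_pow, div_pow, sq_abs, mul_pow, mul_pow]
        have e1 : (‖p‖^2)^2 / (‖v‖^2 * ‖p‖^2) = ‖p‖^2/‖v‖^2 := by
          rw [pow_two (‖p‖^2), mul_comm (‖v‖^2)]
          exact mul_div_mul_left _ _ (by positivity)
        rw [e1]
        have e2 : ‖v‖^2 - ‖p‖^2 = ⟪u,v⟫^2/‖u‖^2 := by rw [hpv2]; ring
        rw [← div_div, ← e2, sub_div, div_self (ne_of_gt (by positivity))]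
      rw [e, Real.sqrt_sq (by positivity)]
  · -- lower bound
    rintro r ⟨w, hw0, hfw0, rfl⟩
    have huw : ⟪u, w⟫ = 0 := by rw [← hfw w]; exact hfw0
    have hwn : (0:ℝ) < ‖w‖ := norm_pos_iff.mpr hw0
    have key := bessel_aux _ u v w hu0 hw0 huw
    have hsum : (|⟪u,v⟫| / (‖u‖ * ‖v‖))^2 ≤ 1 - (⟪v, w⟫ / (‖v‖ * ‖w‖))^2 := by
      have e : (⟪u,v⟫/(‖u‖*‖v‖))^2 + (⟪v,w⟫/(‖v‖*‖w‖))^2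
          = (⟪u,v⟫^2*‖w‖^2 + ⟪v,w⟫^2*‖u‖^2)/(‖u‖^2*‖v‖^2*‖w‖^2) := by
        field_simp
      have h1 : (⟪u,v⟫/(‖u‖*‖v‖))^2 + (⟪v,w⟫/(‖v‖*‖w‖))^2 ≤ 1 := by
        rw [e, div_le_one (by positivity)]
        nlinarith [key]
      have h2 : (|⟪u,v⟫| / (‖u‖ * ‖v‖))^2 = (⟪u,v⟫/(‖u‖*‖v‖))^2 := by
        rw [div_pow, div_pow, sq_abs]
      rw [h2]; linarith
    calc |⟪u,v⟫| / (‖u‖ * ‖v‖)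
        = Real.sqrt ((|⟪u,v⟫| / (‖u‖ * ‖v‖))^2) := (Real.sqrt_sq (by positivity)).symm
      _ ≤ Real.sqrt (1 - (⟪v, w⟫ / (‖v‖ * ‖w‖))^2) := Real.sqrt_le_sqrt hsum
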